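/- arXiv:2104.09201 — 4 statements merged into one kernel-verified Lean document; each statement's English description precedes it below -/
import Mathlib

section
/- Let G be the semidirect product (ℤ/4ℤ × ℤ/4ℤ) ⋊ ℤ/3ℤ, where the generator of ℤ/3ℤ acts on ℤ/4ℤ × ℤ/4ℤ by the matrix [[0,1],[-1,-1]] over ℤ/4ℤ (that is, (a,b) ↦ (−b, a−b)). Then there exists a normal subgroup W of Aut(G) such that W is an elementary abelian 2-group of order 2⁴ = 16 and Aut(G)/W is isomorphic to the symmetric group S₄. -/
/-- The additive automorphism `(a,b) ↦ (-b, a-b)` of `ℤ/4 × ℤ/4`, i.e. the action of the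
matrix `[[0,1],[-1,-1]]` over `ℤ/4ℤ`. -/
def Tmat : (ZMod 4 × ZMod 4) ≃+ (ZMod 4 × ZMod 4) where
  toFun x := (-x.2, x.1 - x.2)
  invFun x := (x.2 - x.1, -x.1)
  left_inv x := by
    apply Prod.ext <;> simp
  right_inv x := by
    apply Prod.ext <;> simp
  map_add' x y := by
    apply Prod.ext <;> simp <;> ring

/-- `Tmat` as a multiplicative automorphism of `Multiplicative (ℤ/4 × ℤ/4)`. -/
def Tmul : MulAut (Multiplicative (ZMod 4 × ZMod 4)) :=
  AddEquiv.toMultiplicative Tmat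

lemma Tmul_cube : Tmul ^ 3 = 1 := by
  apply MulEquiv.ext
  decide

/-- The action of `ℤ/3ℤ` on `ℤ/4 × ℤ/4` by the matrix `[[0,1],[-1,-1]]`, as a homomorphism
`Multiplicative (ℤ/3ℤ) →* MulAut (Multiplicative (ℤ/4 × ℤ/4))`. -/
def actZ3 : Multiplicative (ZMod 3) →* MulAut (Multiplicative (ZMod 4 × ZMod 4)) :=
  AddMonoidHom.toMultiplicativeLeft
    (ZMod.lift 3
      ⟨zmultiplesHom (Additive (MulAut (Multiplicative (ZMod 4 × ZMod 4))))
          (Additive.ofMul Tmul),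
        by
          show (3 : ℤ) • Additive.ofMul Tmul = 0
          have h : Tmul ^ (3 : ℤ) = 1 := by
            rw [show (3 : ℤ) = ((3 : ℕ) : ℤ) by norm_num, zpow_natCast, Tmul_cube]
          rw [← ofMul_zpow, h, ofMul_one]⟩)

/-- `G = (ℤ/4 × ℤ/4) ⋊ ℤ/3`, the generator of `ℤ/3` acting by the matrix
`[[0,1],[-1,-1]]` over `ℤ/4ℤ`. -/
def Gsd := Multiplicative (ZMod 4 × ZMod 4) ⋊[actZ3] Multiplicative (ZMod 3)

instance : Group Gsd := by unfold Gsd; infer_instance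

/-!
Let `V = {g | g² = 1}`, the Klein four-group `2·(ℤ/4)²`, so that `G/V ≅ A₄`. Call two elements
of order 3 equivalent when they agree modulo `V` up to inversion: the four classes correspond to
the Sylow 3-subgroups of `G/V`, and as the relation is defined intrinsically, `Aut(G)` permutes
them. The image of `Aut(G) → S₄` contains a 4-cycle and an adjacent transposition, so it is onto.
An automorphism in the kernel is determined by the images `u, v` of the generators `a, t`, and
fixing the classes forces `u ∈ aV`, `v ∈ tV`. Each of these 16 pairs is realised by an inner
automorphism by an element of `V` composed with multiplication by `1 + 2M` on `(ℤ/4)²`,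
`M ∈ {0, 1, T, 1 + T}`, and all of these are involutions. The finitely many facts about the
group of order 48 that this needs are checked by `decide`.
-/

open Multiplicative

def SameClass {G : Type*} [Group G] (g h : G) : Prop :=
  (g * h⁻¹) ^ 2 = 1 ∨ (g * h) ^ 2 = 1

instance {G : Type*} [Group G] [DecidableEq G] : DecidableRel (SameClass (G := G)) :=
  fun _ _ => by unfold SameClass; infer_instance

lemma SameClass.map {G H F : Type*} [Group G] [Group H] [FunLike F G H] [MonoidHomClass F G H]
    (f : F) {g h : G} (hgh : SameClass g h) : SameClass (f g) (f h) :=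
  hgh.imp (fun e => by rw [← map_inv, ← map_mul, ← map_pow, e, map_one])
    (fun e => by rw [← map_mul, ← map_pow, e, map_one])

namespace Gsd

instance : Fintype Gsd := Fintype.ofEquiv _ SemidirectProduct.equivProd.symm

instance : DecidableEq Gsd := SemidirectProduct.equivProd.decidableEq

def mk (x : ZMod 4 × ZMod 4) (k : ZMod 3) : Gsd := ⟨ofAdd x, ofAdd k⟩

def a : Gsd := mk (1, 0) 0

def t : Gsd := mk 0 1

lemma closure_a_t : Subgroup.closure {a, t} = ⊤ := by
  have hword : ∀ g : Gsd,
      ∃ i j k : Fin 4, g = a ^ (i : ℕ) * (t * a * t⁻¹) ^ (j : ℕ) * t ^ (k : ℕ) := by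
    decide
  refine eq_top_iff.2 fun g _ => ?_
  obtain ⟨i, j, k, rfl⟩ := hword g
  have ha : a ∈ Subgroup.closure {a, t} := Subgroup.subset_closure (by simp)
  have ht : t ∈ Subgroup.closure {a, t} := Subgroup.subset_closure (by simp)
  exact mul_mem (mul_mem (pow_mem ha _) (pow_mem (mul_mem (mul_mem ht ha) (inv_mem ht)) _))
    (pow_mem ht _)

lemma mulAut_ext {φ ψ : MulAut Gsd} (ha : φ a = ψ a) (ht : φ t = ψ t) : φ = ψ :=
  MulEquiv.toMonoidHom_injective <| MonoidHom.eq_of_eqOn_dense closure_a_t <| by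
    rintro g (rfl | rfl) <;> assumption

lemma orderOf_eq_three_iff {g : Gsd} : orderOf g = 3 ↔ g.right ≠ 1 := by
  rw [orderOf_eq_prime_iff]; revert g; decide

/-- The class of `(x, 1)` is read off from `x mod 2 ∈ 𝔽₂²`, and `(x, 2)` is the inverse of
`(-Tx, 1)`. The value at elements of `(ℤ/4)²` is junk. -/
def classIdx (g : Gsd) : Fin 4 :=
  let x := if toAdd g.right = 2 then Tmat (toAdd g.left) else toAdd g.left
  ⟨2 * (x.1.val % 2) + x.2.val % 2, by omega⟩

lemma sameClass_iff_classIdx_eq {g h : Gsd} (hg : orderOf g = 3) (hh : orderOf h = 3) :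
    SameClass g h ↔ classIdx g = classIdx h := by
  rw [orderOf_eq_three_iff] at hg hh
  revert g h; decide +kernel

def classRepWord (u v : Gsd) : Fin 4 → Gsd := ![v, v * u, u * v, v * u * v]

lemma map_classRepWord (φ : MulAut Gsd) (u v : Gsd) (i : Fin 4) :
    φ (classRepWord u v i) = classRepWord (φ u) (φ v) i := by
  fin_cases i <;> simp [classRepWord]

def classRep : Fin 4 → Gsd := classRepWord a t

lemma orderOf_classRep (i : Fin 4) : orderOf (classRep i) = 3 := by
  rw [orderOf_eq_three_iff]; revert i; decide

lemma classIdx_classRep (i : Fin 4) : classIdx (classRep i) = i := by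
  revert i; decide

lemma classIdx_map (φ : MulAut Gsd) {g : Gsd} (hg : orderOf g = 3) :
    classIdx (φ g) = classIdx (φ (classRep (classIdx g))) := by
  have hrep := orderOf_classRep (classIdx g)
  have hg' : SameClass g (classRep (classIdx g)) :=
    (sameClass_iff_classIdx_eq hg hrep).2 (classIdx_classRep _).symm
  rw [← MulEquiv.orderOf_eq φ] at hg hrep
  exact (sameClass_iff_classIdx_eq hg hrep).1 (hg'.map φ)

abbrev classAction : MulAction (MulAut Gsd) (Fin 4) where
  smul φ i := classIdx (φ (classRep i))
  one_smul := classIdx_classRep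
  mul_smul φ ψ i := classIdx_map φ ((MulEquiv.orderOf_eq ψ _).trans (orderOf_classRep i))

def classPerm : MulAut Gsd →* Equiv.Perm (Fin 4) :=
  letI := classAction
  MulAction.toPermHom _ _

lemma classPerm_apply (φ : MulAut Gsd) (i : Fin 4) :
    classPerm φ i = classIdx (φ (classRep i)) :=
  rfl

/-- An automorphism with `a ↦ u` and `t ↦ v` fixes the four classes. -/
def FixesClasses (u v : Gsd) : Prop := ∀ i, classIdx (classRepWord u v i) = i

instance : DecidableRel FixesClasses := fun _ _ => by unfold FixesClasses; infer_instance

lemma mem_ker_classPerm {φ : MulAut Gsd} : φ ∈ classPerm.ker ↔ FixesClasses (φ a) (φ t) := by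
  simp only [MonoidHom.mem_ker, Equiv.ext_iff, classPerm_apply, classRep, map_classRepWord,
    Equiv.Perm.coe_one, id_eq, FixesClasses]

lemma card_fixesClasses : Fintype.card {p : Gsd × Gsd // FixesClasses p.1 p.2} = 16 := by
  decide +kernel

/-- Multiplication by `1 + 2(p₁ + p₂T)`; it commutes with `T` and squares to `1` as `4 = 0`. -/
def scalar (p : ZMod 2 × ZMod 2) : (ZMod 4 × ZMod 4) ≃+ (ZMod 4 × ZMod 4) where
  toFun x := x + 2 • (p.1.val • x + p.2.val • Tmat x)
  invFun x := x + 2 • (p.1.val • x + p.2.val • Tmat x)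
  left_inv x := by revert p x; decide
  right_inv x := by revert p x; decide
  map_add' x y := by simp only [map_add, smul_add]; abel

def scalarAut (p : ZMod 2 × ZMod 2) : MulAut Gsd :=
  SemidirectProduct.congr (AddEquiv.toMultiplicative (scalar p)) (MulEquiv.refl _)
    fun g => MulEquiv.ext <| by revert p g; decide

lemma scalarAut_mul_self (p : ZMod 2 × ZMod 2) : scalarAut p * scalarAut p = 1 :=
  MulEquiv.ext fun _ => SemidirectProduct.ext (congrArg ofAdd ((scalar p).left_inv _)) rfl

lemma scalarAut_apply_of_mul_self : ∀ p (w : Gsd), w * w = 1 → scalarAut p w = w := by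
  decide +kernel

lemma exists_conj_mul_scalarAut : ∀ u v : Gsd, FixesClasses u v →
    ∃ w : Gsd, w * w = 1 ∧ ∃ p, (MulAut.conj w * scalarAut p) a = u ∧
      (MulAut.conj w * scalarAut p) t = v := by
  decide +kernel

lemma exists_eq_conj_mul_scalarAut {φ : MulAut Gsd} (hφ : φ ∈ classPerm.ker) :
    ∃ w : Gsd, w * w = 1 ∧ ∃ p, φ = MulAut.conj w * scalarAut p := by
  obtain ⟨w, hw, p, ha, ht⟩ := exists_conj_mul_scalarAut _ _ (mem_ker_classPerm.1 hφ)
  exact ⟨w, hw, p, (mulAut_ext ha ht).symm⟩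

lemma conj_mul_scalarAut_mul_self {w : Gsd} (hw : w * w = 1) (p : ZMod 2 × ZMod 2) :
    MulAut.conj w * scalarAut p * (MulAut.conj w * scalarAut p) = 1 := by
  have hs : ∀ g, scalarAut p (scalarAut p g) = g := fun g =>
    DFunLike.congr_fun (scalarAut_mul_self p) g
  refine MulEquiv.ext fun g => ?_
  simp only [MulAut.mul_apply, MulAut.conj_apply, map_mul, map_inv,
    scalarAut_apply_of_mul_self p w hw, hs, MulAut.one_apply]
  calc _ = (w * w) * g * (w * w)⁻¹ := by group
    _ = g := by rw [hw]; group

lemma mul_self_eq_one_of_mem_ker {φ : MulAut Gsd} (hφ : φ ∈ classPerm.ker) : φ * φ = 1 := by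
  obtain ⟨w, hw, p, rfl⟩ := exists_eq_conj_mul_scalarAut hφ
  exact conj_mul_scalarAut_mul_self hw p

lemma card_ker_classPerm : Nat.card classPerm.ker = 16 := by
  rw [← card_fixesClasses, ← Nat.card_eq_fintype_card]
  refine Nat.card_congr (Equiv.ofBijective (fun φ => ⟨(φ.1 a, φ.1 t), mem_ker_classPerm.1 φ.2⟩)
    ⟨fun φ ψ h => Subtype.ext (mulAut_ext ?_ ?_), fun ⟨⟨u, v⟩, huv⟩ => ?_⟩)
  · exact congrArg (·.1.1) h
  · exact congrArg (·.1.2) h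
  obtain ⟨w, -, p, ha, ht⟩ := exists_conj_mul_scalarAut u v huv
  exact ⟨⟨_, mem_ker_classPerm.2 (ha ▸ ht ▸ huv)⟩, Subtype.ext (Prod.ext ha ht)⟩

/-- Swaps the coordinates of `ℤ/4 × ℤ/4` and inverts `ℤ/3`: the swap conjugates `T` to `T⁻¹`. -/
def swapAut : MulAut Gsd :=
  SemidirectProduct.congr (AddEquiv.toMultiplicative AddEquiv.prodComm) (MulEquiv.inv _)
    fun g => MulEquiv.ext <| by revert g; decide

lemma classPerm_conj_mul_swapAut :
    classPerm (MulAut.conj (mk (1, 1) 1) * swapAut) = finRotate 4 := by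
  ext i; revert i; decide +kernel

lemma classPerm_swapAut : classPerm swapAut = Equiv.swap 2 (finRotate 4 2) := by
  ext i; revert i; decide +kernel

lemma classPerm_surjective : Function.Surjective classPerm := by
  rw [← MonoidHom.range_eq_top, eq_top_iff,
    ← Equiv.Perm.closure_cycle_adjacent_swap isCycle_finRotate support_finRotate 2,
    Subgroup.closure_le]
  rintro _ (rfl | rfl)
  · exact ⟨_, classPerm_conj_mul_swapAut⟩
  · exact ⟨_, classPerm_swapAut⟩

end Gsd

/-- Let `G = (ℤ/4ℤ × ℤ/4ℤ) ⋊ ℤ/3ℤ` where the generator of `ℤ/3ℤ` acts by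
the matrix `[[0,1],[-1,-1]]` over `ℤ/4ℤ`.  Then there is a normal subgroup `W ⊴ Aut(G)`
which is elementary abelian of order `2⁴ = 16` such that `Aut(G)/W ≅ S₄`
(expressed by a surjection `Aut(G) → S₄` with kernel `W`). -/
theorem stmt2 :
    ∃ W : Subgroup (MulAut Gsd), W.Normal ∧ (∀ w ∈ W, w * w = 1) ∧ Nat.card W = 16 ∧
      ∃ f : MulAut Gsd →* Equiv.Perm (Fin 4), Function.Surjective f ∧ f.ker = W :=
  ⟨Gsd.classPerm.ker, Gsd.classPerm.normal_ker, fun _ => Gsd.mul_self_eq_one_of_mem_ker,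
    Gsd.card_ker_classPerm, Gsd.classPerm, Gsd.classPerm_surjective, rfl⟩
end

section
/- Let F be a field, let A be a finite group with a normal subgroup G, and let 𝒳 : G → GL_n(F) be an irreducible F-representation of G (the space Fⁿ has no nonzero proper 𝒳(G)-invariant subspace). Suppose that for every a ∈ A the conjugate representation g ↦ 𝒳(a g a⁻¹) is equivalent to 𝒳. Let Z = C_{GL_n(F)}(𝒳(G)) be the centralizer of 𝒳(G) in GL_n(F). Then there exist maps 𝒴 : A → GL_n(F) and α : A × A → Z such that for all g ∈ G and a, b ∈ A: (i) 𝒴(g) = 𝒳(g); (ii) 𝒴(a)⁻¹ 𝒳(g) 𝒴(a) = 𝒳(a⁻¹ g a); (iii) 𝒴(a) 𝒴(b) = α(a,b) 𝒴(ab); (iv) α(a,g) = α(g,a) = 1. -/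
open scoped MatrixGroups

/-!
Choose a representative `t` in every coset of `G`, and for it a matrix `P t` conjugating `𝒳`
into its `t`-conjugate, with `P t = 𝒳 t` when `t ∈ G`. For `a` in the coset of `t` put
`𝒴 a = 𝒳 (a t⁻¹) * P t`: it conjugates `𝒳` into its `a`-conjugate and satisfies
`𝒴 (g a) = 𝒳 g * 𝒴 a`. Then `α (a, b) = 𝒴 a * 𝒴 b * (𝒴 (a b))⁻¹` conjugates `𝒳` into its
conjugate by `a b (a b)⁻¹ = 1`, i.e. it centralizes `𝒳 (G)`.
-/

namespace MonoidHom

variable {A M : Type*} [Group A] [Group M] {G : Subgroup A} [G.Normal] (X : G →* M)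

def Intertwines (a : A) (Q : M) : Prop :=
  ∀ g : G, X ⟨a * g * a⁻¹, ‹G.Normal›.conj_mem g g.2 a⟩ = Q * X g * Q⁻¹

variable {X}

theorem intertwines_map (g : G) : Intertwines X g (X g) := fun x => by
  rw [← map_inv, ← map_mul, ← map_mul]
  rfl

theorem Intertwines.mul {a b : A} {Q R : M} (hQ : Intertwines X a Q) (hR : Intertwines X b R) :
    Intertwines X (a * b) (Q * R) := fun g => by
  calc X ⟨a * b * g * (a * b)⁻¹, _⟩
      = X ⟨a * (b * g * b⁻¹) * a⁻¹, ‹G.Normal›.conj_mem _ (‹G.Normal›.conj_mem g g.2 b) a⟩ :=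
        congrArg X (Subtype.ext (by group))
    _ = Q * R * X g * (Q * R)⁻¹ := by
        rw [hQ ⟨b * g * b⁻¹, ‹G.Normal›.conj_mem g g.2 b⟩, hR g]
        group

theorem Intertwines.inv_mul_mul {a : A} {Q : M} (hQ : Intertwines X a Q) (g : G) :
    Q⁻¹ * X g * Q = X ⟨a⁻¹ * g * a, by simpa using ‹G.Normal›.conj_mem g g.2 a⁻¹⟩ := by
  set x : G := ⟨a⁻¹ * g * a, by simpa using ‹G.Normal›.conj_mem g g.2 a⁻¹⟩
  have hg : g = ⟨a * x * a⁻¹, ‹G.Normal›.conj_mem x x.2 a⟩ := Subtype.ext (by simp only [x]; group)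
  conv_lhs => rw [hg, hQ x]
  group

theorem Intertwines.mul_inv_mem_centralizer {a : A} {Q R : M} (hQ : Intertwines X a Q)
    (hR : Intertwines X a R) : Q * R⁻¹ ∈ Subgroup.centralizer (Set.range X) := by
  rw [Subgroup.mem_centralizer_iff]
  rintro _ ⟨g, rfl⟩
  have h : Q⁻¹ * X g * Q = R⁻¹ * X g * R := by rw [hQ.inv_mul_mul, hR.inv_mul_mul]
  calc X g * (Q * R⁻¹) = Q * (Q⁻¹ * X g * Q) * R⁻¹ := by group
    _ = Q * (R⁻¹ * X g * R) * R⁻¹ := by rw [h]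
    _ = Q * R⁻¹ * X g := by group

theorem Intertwines.mul_map {a : A} {Q : M} (hQ : Intertwines X a Q) (g : G) :
    Q * X g = X ⟨a * g * a⁻¹, ‹G.Normal›.conj_mem g g.2 a⟩ * Q := by
  rw [hQ g]
  group

variable (X) in
theorem exists_intertwining_extension (hX : ∀ a : A, ∃ Q : M, Intertwines X a Q) :
    ∃ Y : A → M, (∀ a, Intertwines X a (Y a)) ∧ (∀ g : G, Y g = X g) ∧
      ∀ (g : G) (a : A), Y (g * a) = X g * Y a := by
  classical
  choose P hP using hX
  let P' : A → M := fun t => if ht : t ∈ G then X ⟨t, ht⟩ else P t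
  have hP' : ∀ t, Intertwines X t (P' t) := fun t => by
    by_cases ht : t ∈ G
    · simpa only [P', dif_pos ht] using intertwines_map ⟨t, ht⟩
    · simpa only [P', dif_neg ht] using hP t
  let r : A → A := fun a => (a : A ⧸ G).out
  have hr : ∀ a, a * (r a)⁻¹ ∈ G := fun a => by
    obtain ⟨h, hh⟩ := QuotientGroup.mk_out_eq_mul G a
    change a * ((a : A ⧸ G).out)⁻¹ ∈ G
    rw [hh, mul_inv_rev, ← mul_assoc]
    exact ‹G.Normal›.conj_mem _ (inv_mem h.2) a
  have hr_mul : ∀ (g : G) a, r (g * a) = r a := fun g a => by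
    simp only [r, QuotientGroup.mk_mul, (QuotientGroup.eq_one_iff _).mpr g.2, one_mul]
  refine ⟨fun a => X ⟨a * (r a)⁻¹, hr a⟩ * P' (r a), fun a => ?_, fun g => ?_, fun g a => ?_⟩
  · simpa using (intertwines_map ⟨a * (r a)⁻¹, hr a⟩).mul (hP' (r a))
  · have hrg : r g ∈ G := by simpa using mul_mem (inv_mem (hr g)) g.2
    simp only [P', dif_pos hrg, ← map_mul]
    congr 1
    ext
    simp
  · dsimp only
    rw [← mul_assoc, ← map_mul]
    congr 2
    · ext
      simp [hr_mul, mul_assoc]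
    · exact hr_mul g a

end MonoidHom

/-- Let `F` be a field, `A` a finite group with a normal subgroup `G`, and
`𝒳 : G → GL_n(F)` an irreducible `F`-representation of `G`.  Suppose that for every `a ∈ A`
the conjugate representation `g ↦ 𝒳(a g a⁻¹)` is equivalent to `𝒳`.  Let
`Z = C_{GL_n(F)}(𝒳(G))`.  Then there exist maps `𝒴 : A → GL_n(F)` and `α : A × A → Z`
such that for all `g ∈ G` and `a, b ∈ A`:
(i) `𝒴(g) = 𝒳(g)`; (ii) `𝒴(a)⁻¹ 𝒳(g) 𝒴(a) = 𝒳(a⁻¹ g a)`;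
(iii) `𝒴(a) 𝒴(b) = α(a,b) 𝒴(ab)`; (iv) `α(a,g) = α(g,a) = 1`. -/
theorem stmt3 (F : Type) [Field F] (n : ℕ) (A : Type) [Group A]
    (G : Subgroup A) (hG : G.Normal)
    (𝒳 : G →* GL (Fin n) F)
    (hinv : ∀ a : A, ∃ P : GL (Fin n) F, ∀ g : G,
      𝒳 ⟨a * g * a⁻¹, hG.conj_mem g.1 g.2 a⟩ = P * 𝒳 g * P⁻¹) :
    ∃ (Y : A → GL (Fin n) F) (α : A × A → GL (Fin n) F),
      (∀ x : A × A, α x ∈ Subgroup.centralizer (Set.range fun g : G => 𝒳 g)) ∧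
      (∀ g : G, Y g = 𝒳 g) ∧
      (∀ (g : G) (a : A),
        (Y a)⁻¹ * 𝒳 g * Y a =
          𝒳 ⟨a⁻¹ * g * a, by simpa using hG.conj_mem g.1 g.2 a⁻¹⟩) ∧
      (∀ a b : A, Y a * Y b = α (a, b) * Y (a * b)) ∧
      (∀ (g : G) (a : A), α (g, a) = 1 ∧ α (a, g) = 1) := by
  obtain ⟨Y, hY, hYG, hY_mul_left⟩ := 𝒳.exists_intertwining_extension hinv
  have hY_mul_right : ∀ (a : A) (g : G), Y (a * g) = Y a * 𝒳 g := fun a g => by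
    have hg : a * g = (⟨a * g * a⁻¹, hG.conj_mem g g.2 a⟩ : G) * a := by group
    rw [hg, hY_mul_left, (hY a).mul_map]
  refine ⟨Y, fun x => Y x.1 * Y x.2 * (Y (x.1 * x.2))⁻¹,
    fun x => ((hY x.1).mul (hY x.2)).mul_inv_mem_centralizer (hY _), hYG,
    fun g a => (hY a).inv_mul_mul g, fun a b => by group, fun g a => ⟨?_, ?_⟩⟩
  · simp [hYG, hY_mul_left]
  · simp [hYG, hY_mul_right]
end

section
/- Let F be a field, let G be a finite group with trivial center, and let 𝒳 : G → GL_n(F) be a faithful irreducible F-representation of G. Let N = N_{GL_n(F)}(𝒳(G)) be the normalizer and Z = C_{GL_n(F)}(𝒳(G)) the centralizer of 𝒳(G) in GL_n(F). Then N/Z is isomorphic to the inertia subgroup I = { σ ∈ Aut(G) : the representation 𝒳∘σ is equivalent to 𝒳 } of Aut(G). -/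
/-! Conjugation by an element of `N` preserves `𝒳(G)`, so via the faithful `𝒳` it induces an
automorphism of `G`, which lies in `I` with intertwiner that element: this is the conjugation
map `N(H) → Aut(H)` for `H = 𝒳(G) ≅ G`, whose kernel is `C(H)`. Conversely an intertwiner `P`
for `σ ∈ I` satisfies `P 𝒳(G) P⁻¹ = 𝒳(σ G) = 𝒳(G)`, so lies in `N` and induces `σ`. -/

open scoped MatrixGroups

/-- The inertia subgroup of `Aut(G)` of a matrix representation `𝒳` of `G`:
those automorphisms `σ` for which the twisted representation `𝒳 ∘ σ` is equivalent to `𝒳`. -/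
def inertia {F : Type} [Field F] {n : ℕ} {G : Type} [Group G]
    (𝒳 : G →* GL (Fin n) F) : Subgroup (MulAut G) where
  carrier := {σ | ∃ P : GL (Fin n) F, ∀ g : G, 𝒳 (σ g) = P * 𝒳 g * P⁻¹}
  one_mem' := ⟨1, fun g => by simp⟩
  mul_mem' := by
    rintro σ τ ⟨P, hP⟩ ⟨Q, hQ⟩
    refine ⟨P * Q, fun g => ?_⟩
    have h1 : (σ * τ) g = σ (τ g) := rfl
    rw [h1, hP (τ g), hQ g, mul_inv_rev]
    group
  inv_mem' := by
    rintro σ ⟨P, hP⟩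
    refine ⟨P⁻¹, fun g => ?_⟩
    have h1 : σ (σ⁻¹ g) = g := by
      simp [MulAut.inv_def]
    have h2 := hP (σ⁻¹ g)
    rw [h1] at h2
    rw [h2]
    group

namespace MonoidHom

open Function Subgroup

variable {G K : Type*} [Group G] [Group K] {φ : G →* K}

noncomputable def normalizerRangeToMulAut (hφ : Injective φ) :
    normalizer (φ.range : Set K) →* MulAut G :=
  (MulAut.congr (ofInjective hφ).symm : MulAut φ.range →* MulAut G).comp
    φ.range.normalizerMonoidHom

theorem apply_normalizerRangeToMulAut (hφ : Injective φ) (P : normalizer (φ.range : Set K))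
    (g : G) : φ (normalizerRangeToMulAut hφ P g) = P * φ g * P⁻¹ :=
  apply_ofInjective_symm hφ _

theorem ker_normalizerRangeToMulAut (hφ : Injective φ) :
    (normalizerRangeToMulAut hφ).ker =
      (centralizer (φ.range : Set K)).subgroupOf (normalizer (φ.range : Set K)) := by
  rw [normalizerRangeToMulAut, ker_mulEquiv_comp, normalizerMonoidHom_ker]

theorem mem_range_normalizerRangeToMulAut_iff (hφ : Injective φ) (σ : MulAut G) :
    σ ∈ (normalizerRangeToMulAut hφ).range ↔ ∃ P : K, ∀ g, φ (σ g) = P * φ g * P⁻¹ := by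
  constructor
  · rintro ⟨P, rfl⟩
    exact ⟨P, apply_normalizerRangeToMulAut hφ P⟩
  · rintro ⟨P, hP⟩
    have hconj : (MulAut.conj P : K →* K).comp φ = φ.comp σ :=
      ext fun g => (hP g).symm
    have hPN : P ∈ normalizer (φ.range : Set K) := by
      rw [mem_normalizer_iff_map_conj_eq, ← range_comp, hconj, range_comp,
        range_eq_top.2 σ.surjective, ← range_eq_map]
    exact ⟨⟨P, hPN⟩, MulEquiv.ext fun g => hφ <| by rw [apply_normalizerRangeToMulAut, hP]; rfl⟩

end MonoidHom

theorem stmt4_general (F : Type) [Field F] (n : ℕ) (G : Type) [Group G]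
    (𝒳 : G →* GL (Fin n) F) (hfaithful : Function.Injective 𝒳) :
    ∃ f : ↥(Subgroup.normalizer (𝒳.range : Set (GL (Fin n) F))) →* ↥(inertia 𝒳),
      Function.Surjective f ∧
        f.ker = (Subgroup.centralizer (𝒳.range : Set (GL (Fin n) F))).subgroupOf
          (Subgroup.normalizer (𝒳.range : Set (GL (Fin n) F))) := by
  have hrange : (MonoidHom.normalizerRangeToMulAut hfaithful).range = inertia 𝒳 :=
    SetLike.ext (MonoidHom.mem_range_normalizerRangeToMulAut_iff hfaithful)
  refine ⟨(MonoidHom.normalizerRangeToMulAut hfaithful).codRestrict (inertia 𝒳)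
    (fun P => hrange ▸ ⟨P, rfl⟩), ?_, ?_⟩
  · rintro ⟨σ, hσ⟩
    obtain ⟨P, rfl⟩ := hrange ▸ hσ
    exact ⟨P, rfl⟩
  · rw [MonoidHom.ker_codRestrict, MonoidHom.ker_normalizerRangeToMulAut]

/-- Let `F` be a field, `G` a finite group with trivial centre, and
`𝒳 : G → GL_n(F)` a faithful irreducible `F`-representation of `G`.  Let
`N = N_{GL_n(F)}(𝒳(G))` and `Z = C_{GL_n(F)}(𝒳(G))`.  Then `N/Z` is isomorphic to the
inertia subgroup `I = {σ ∈ Aut(G) : 𝒳 ∘ σ ∼ 𝒳}` of `Aut(G)` (expressed here by a surjective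
homomorphism `N → I` with kernel `Z`). -/
theorem stmt4 (F : Type) [Field F] (n : ℕ) (G : Type) [Group G] [Finite G]
    (hZ : Subgroup.center G = ⊥)
    (𝒳 : G →* GL (Fin n) F) (hfaithful : Function.Injective 𝒳)
    (hirr : ∀ W : Submodule F (Fin n → F),
      (∀ (g : G) (w : Fin n → F), w ∈ W → ((𝒳 g : Matrix (Fin n) (Fin n) F)).mulVec w ∈ W) →
      W = ⊥ ∨ W = ⊤) :
    ∃ f : ↥(Subgroup.normalizer (𝒳.range : Set (GL (Fin n) F))) →* ↥(inertia 𝒳),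
      Function.Surjective f ∧
        f.ker = (Subgroup.centralizer (𝒳.range : Set (GL (Fin n) F))).subgroupOf
          (Subgroup.normalizer (𝒳.range : Set (GL (Fin n) F))) :=
  stmt4_general F n G 𝒳 hfaithful
end

section
/- Let A be a finite abelian group, Q a finite group, and 𝒞 : Q → Aut(A) an injective homomorphism, and let G = A ⋊ Q be the corresponding semidirect product. Let Aut_A(G) = { σ ∈ Aut(G) : σ(A) = A } be the subgroup of automorphisms of G leaving A invariant. Then there is a short exact sequence of groups 0 → Z¹(Q,A) → Aut_A(G) → N_{Aut(A)}(𝒞(Q)) → 1; that is, there is a surjective homomorphism Aut_A(G) → N_{Aut(A)}(𝒞(Q)) whose kernel is isomorphic to the group Z¹(Q,A) of 1-cocycles. -/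
/-- The group of 1-cocycles `Z¹(Q,A)` of `Q` with coefficients in the `Q`-group `A`
(written multiplicatively), for the action `𝒞 : Q → Aut(A)`. -/
def oneCocyclesGrp {A : Type} [CommGroup A] {Q : Type} [Group Q]
    (𝒞 : Q →* MulAut A) : Subgroup (Q → A) where
  carrier := {θ | ∀ x y : Q, θ (x * y) = θ x * 𝒞 x (θ y)}
  one_mem' := fun x y => by simp
  mul_mem' := by
    intro θ η hθ hη x y
    simp only [Pi.mul_apply, hθ x y, hη x y, map_mul]
    exact mul_mul_mul_comm _ _ _ _
  inv_mem' := by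
    intro θ hθ x y
    simp only [Pi.inv_apply, hθ x y, map_inv, mul_inv_rev]
    exact mul_comm _ _

/-- The subgroup `Aut(e)` of automorphisms of `G` leaving the subgroup `μ(A)` invariant. -/
def autOfExt {A : Type} [CommGroup A] {G : Type} [Group G] (μ : A →* G) :
    Subgroup (MulAut G) where
  carrier := {σ | μ.range.map σ.toMonoidHom = μ.range}
  one_mem' := by
    show μ.range.map (1 : MulAut G).toMonoidHom = μ.range
    rw [show ((1 : MulAut G).toMonoidHom) = MonoidHom.id G from rfl, Subgroup.map_id]
  mul_mem' := by
    intro σ τ hσ hτ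
    have : (σ * τ).toMonoidHom = σ.toMonoidHom.comp τ.toMonoidHom := rfl
    show μ.range.map (σ * τ).toMonoidHom = μ.range
    rw [this, ← Subgroup.map_map, hτ, hσ]
  inv_mem' := by
    intro σ hσ
    show μ.range.map σ⁻¹.toMonoidHom = μ.range
    conv_lhs => rw [← hσ]
    rw [Subgroup.map_map]
    have : σ⁻¹.toMonoidHom.comp σ.toMonoidHom = MonoidHom.id G := by
      ext g
      exact σ.symm_apply_apply g
    rw [this, Subgroup.map_id]

/-! Restricting to `A` sends `σ ∈ Aut_A(G)` into the normalizer, because `σ` conjugates `𝒞 q`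
into `𝒞` of the `Q`-component of `σ (inr q)`. Conversely, `ρ` in the normalizer induces an
automorphism `ψ` of `Q ≅ 𝒞(Q)` with `𝒞 (ψ q) = ρ 𝒞(q) ρ⁻¹`, and `ρ × ψ` is an automorphism of
`A ⋊ Q` restricting to `ρ`. An automorphism fixing `A` pointwise induces the identity on `Q`
because `𝒞` is injective, so it is `(a, q) ↦ (a θ(q), q)` for some `θ`, and such a map is
multiplicative exactly when `θ` is a 1-cocycle. -/

open SemidirectProduct

section restriction

variable {A G : Type} [CommGroup A] [Group G] {μ : A →* G}

lemma mem_autOfExt_iff {σ : MulAut G} : σ ∈ autOfExt μ ↔ μ.range.map (σ : G →* G) = μ.range :=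
  Iff.rfl

lemma mem_autOfExt_of_map_eq {σ : MulAut G} (ρ : MulAut A) (h : ∀ a, σ (μ a) = μ (ρ a)) :
    σ ∈ autOfExt μ := by
  rw [mem_autOfExt_iff, MonoidHom.map_range, show (σ : G →* G).comp μ = μ.comp ρ.toMonoidHom from
    MonoidHom.ext h, MonoidHom.range_comp, MonoidHom.range_eq_top.mpr ρ.surjective,
    ← MonoidHom.range_eq_map]

noncomputable def restrictAut (hμ : Function.Injective μ) {σ : MulAut G} (hσ : σ ∈ autOfExt μ) :
    MulAut A :=
  (MonoidHom.ofInjective hμ).trans <|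
    (σ.subgroupMap μ.range).trans <|
      (MulEquiv.subgroupCongr (mem_autOfExt_iff.mp hσ)).trans (MonoidHom.ofInjective hμ).symm

lemma map_restrictAut_apply (hμ : Function.Injective μ) {σ : MulAut G} (hσ : σ ∈ autOfExt μ)
    (a : A) : μ (restrictAut hμ hσ a) = σ (μ a) := by
  rw [restrictAut, MulEquiv.trans_apply, MulEquiv.trans_apply, MulEquiv.trans_apply,
    MonoidHom.apply_ofInjective_symm, MulEquiv.subgroupCongr_apply, MulEquiv.coe_subgroupMap_apply,
    MonoidHom.ofInjective_apply]

noncomputable def restrictAutOfExt (hμ : Function.Injective μ) : autOfExt μ →* MulAut A where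
  toFun σ := restrictAut hμ σ.2
  map_one' := by ext; apply hμ; simp [map_restrictAut_apply]
  map_mul' σ τ := by ext; apply hμ; simp [map_restrictAut_apply]

lemma map_restrictAutOfExt_apply (hμ : Function.Injective μ) (σ : autOfExt μ) (a : A) :
    μ (restrictAutOfExt hμ σ a) = (σ : MulAut G) (μ a) :=
  map_restrictAut_apply hμ σ.2 a

end restriction

section semidirect

variable {A Q : Type} [CommGroup A] [Group Q] {𝒞 : Q →* MulAut A}

lemma SemidirectProduct.mul_inl_mul_inv (g : A ⋊[𝒞] Q) (a : A) :
    g * inl a * g⁻¹ = inl (𝒞 g.right a) := by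
  ext <;> simp [mul_comm]

lemma restrictAutOfExt_mul_mul_inv (σ : autOfExt (inl : A →* A ⋊[𝒞] Q)) (q : Q) :
    restrictAutOfExt inl_injective σ * 𝒞 q * (restrictAutOfExt inl_injective σ)⁻¹ =
      𝒞 ((σ : MulAut (A ⋊[𝒞] Q)) (inr q)).right := by
  set ρ := restrictAutOfExt inl_injective σ
  ext a
  apply inl_injective (φ := 𝒞)
  obtain ⟨b, rfl⟩ := ρ.surjective a
  calc inl ((ρ * 𝒞 q * ρ⁻¹) (ρ b))
      = (σ : MulAut (A ⋊[𝒞] Q)) (inr q * inl b * (inr q)⁻¹) := by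
        simp [ρ, map_restrictAutOfExt_apply, inl_aut]
    _ = inl (𝒞 ((σ : MulAut (A ⋊[𝒞] Q)) (inr q)).right (ρ b)) := by
        rw [map_mul, map_mul, map_inv, ← map_restrictAutOfExt_apply, mul_inl_mul_inv]

lemma range_restrictAutOfExt_le_normalizer :
    (restrictAutOfExt (inl_injective (φ := 𝒞))).range ≤
      Subgroup.normalizer (𝒞.range : Set (MulAut A)) := by
  rw [Subgroup.le_normalizer_iff]
  rintro _ ⟨σ, rfl⟩ _ ⟨q, rfl⟩
  exact ⟨_, (restrictAutOfExt_mul_mul_inv σ q).symm⟩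

noncomputable def extendAut (hC : Function.Injective 𝒞) {ρ : MulAut A}
    (hρ : ρ ∈ Subgroup.normalizer (𝒞.range : Set (MulAut A))) : MulAut (A ⋊[𝒞] Q) :=
  let ψ : Q ≃* Q := (MonoidHom.ofInjective hC).trans <|
    (𝒞.range.normalizerMonoidHom ⟨ρ, hρ⟩).trans (MonoidHom.ofInjective hC).symm
  have hψ (q : Q) : 𝒞 (ψ q) = ρ * 𝒞 q * ρ⁻¹ := by
    simp only [ψ, MulEquiv.trans_apply, MonoidHom.apply_ofInjective_symm]
    rw [Subgroup.normalizerMonoidHom_apply_apply_coe, MonoidHom.ofInjective_apply]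
  SemidirectProduct.congr ρ ψ fun q => by ext a; simp [hψ]

lemma extendAut_inl (hC : Function.Injective 𝒞) {ρ : MulAut A}
    (hρ : ρ ∈ Subgroup.normalizer (𝒞.range : Set (MulAut A))) (a : A) :
    extendAut hC hρ (inl a) = inl (ρ a) := by
  ext <;> simp [extendAut]

lemma normalizer_le_range_restrictAutOfExt (hC : Function.Injective 𝒞) :
    Subgroup.normalizer (𝒞.range : Set (MulAut A)) ≤
      (restrictAutOfExt (inl_injective (φ := 𝒞))).range := by
  intro ρ hρ
  refine ⟨⟨extendAut hC hρ, mem_autOfExt_of_map_eq ρ (extendAut_inl hC hρ)⟩, ?_⟩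
  ext a
  apply inl_injective (φ := 𝒞)
  rw [map_restrictAutOfExt_apply, extendAut_inl]

lemma range_restrictAutOfExt (hC : Function.Injective 𝒞) :
    (restrictAutOfExt (inl_injective (φ := 𝒞))).range =
      Subgroup.normalizer (𝒞.range : Set (MulAut A)) :=
  le_antisymm range_restrictAutOfExt_le_normalizer (normalizer_le_range_restrictAutOfExt hC)

lemma oneCocyclesGrp.apply_one {θ : Q → A} (hθ : θ ∈ oneCocyclesGrp 𝒞) : θ 1 = 1 := by
  simpa using hθ 1 1

def cocycleAut (θ : oneCocyclesGrp 𝒞) : MulAut (A ⋊[𝒞] Q) where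
  toFun g := ⟨g.left * θ.1 g.right, g.right⟩
  invFun g := ⟨g.left * (θ.1 g.right)⁻¹, g.right⟩
  left_inv g := by ext <;> simp
  right_inv g := by ext <;> simp
  map_mul' g h := by
    ext
    · simp only [mul_left, mul_right, θ.2 g.right h.right, map_mul]
      ac_rfl
    · rfl

@[simp]
lemma cocycleAut_apply (θ : oneCocyclesGrp 𝒞) (g : A ⋊[𝒞] Q) :
    cocycleAut θ g = ⟨g.left * θ.1 g.right, g.right⟩ := rfl

lemma cocycleAut_inl (θ : oneCocyclesGrp 𝒞) (a : A) : cocycleAut θ (inl a) = inl a := by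
  ext <;> simp [oneCocyclesGrp.apply_one θ.2]

def cocycleAutHom : oneCocyclesGrp 𝒞 →* autOfExt (inl : A →* A ⋊[𝒞] Q) where
  toFun θ := ⟨cocycleAut θ, mem_autOfExt_of_map_eq 1 (cocycleAut_inl θ)⟩
  map_one' := by ext <;> simp
  map_mul' θ η := by ext <;> simp [mul_comm, mul_left_comm]

@[simp]
lemma coe_cocycleAutHom (θ : oneCocyclesGrp 𝒞) :
    (cocycleAutHom θ : MulAut (A ⋊[𝒞] Q)) = cocycleAut θ := rfl

lemma cocycleAutHom_injective : Function.Injective (cocycleAutHom (𝒞 := 𝒞)) := by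
  intro θ η h
  ext q
  have h' := DFunLike.congr_fun (congrArg Subtype.val h) (inr q)
  simpa using congrArg SemidirectProduct.left h'

lemma range_cocycleAutHom_le_ker :
    (cocycleAutHom (𝒞 := 𝒞)).range ≤ (restrictAutOfExt inl_injective).ker := by
  rintro _ ⟨θ, rfl⟩
  ext a
  apply inl_injective (φ := 𝒞)
  rw [map_restrictAutOfExt_apply, coe_cocycleAutHom, cocycleAut_inl, MulAut.one_apply]

variable {σ : autOfExt (inl : A →* A ⋊[𝒞] Q)}

lemma apply_inl_of_restrictAutOfExt_eq_one (hσ : restrictAutOfExt inl_injective σ = 1) (a : A) :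
    (σ : MulAut (A ⋊[𝒞] Q)) (inl a) = inl a := by
  rw [← map_restrictAutOfExt_apply inl_injective σ a, hσ, MulAut.one_apply]

lemma apply_inr_of_restrictAutOfExt_eq_one (hC : Function.Injective 𝒞)
    (hσ : restrictAutOfExt inl_injective σ = 1) (q : Q) :
    (σ : MulAut (A ⋊[𝒞] Q)) (inr q) = ⟨((σ : MulAut (A ⋊[𝒞] Q)) (inr q)).left, q⟩ := by
  have h := restrictAutOfExt_mul_mul_inv σ q
  rw [hσ, one_mul, inv_one, mul_one] at h
  ext
  · rfl
  · exact hC h.symm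

lemma ker_le_range_cocycleAutHom (hC : Function.Injective 𝒞) :
    (restrictAutOfExt inl_injective).ker ≤ (cocycleAutHom (𝒞 := 𝒞)).range := by
  intro σ hσ
  set θ : Q → A := fun q => ((σ : MulAut (A ⋊[𝒞] Q)) (inr q)).left
  have hinr := apply_inr_of_restrictAutOfExt_eq_one hC hσ
  have hθ : θ ∈ oneCocyclesGrp 𝒞 := fun x y => by
    have h := congrArg SemidirectProduct.left (map_mul (σ : MulAut (A ⋊[𝒞] Q)) (inr x) (inr y))
    rwa [← map_mul, mul_left, hinr x] at h
  refine ⟨⟨θ, hθ⟩, Subtype.ext (MulEquiv.ext fun g => ?_)⟩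
  conv_rhs =>
    rw [← inl_left_mul_inr_right g, map_mul, apply_inl_of_restrictAutOfExt_eq_one hσ, hinr]
  ext <;> simp [θ]

noncomputable def cocyclesEquivKerRestrictAutOfExt (hC : Function.Injective 𝒞) :
    oneCocyclesGrp 𝒞 ≃* (restrictAutOfExt (inl_injective (φ := 𝒞))).ker :=
  (MonoidHom.ofInjective cocycleAutHom_injective).trans <| MulEquiv.subgroupCongr <|
    le_antisymm range_cocycleAutHom_le_ker (ker_le_range_cocycleAutHom hC)

end semidirect

theorem stmt8_general (A : Type) [CommGroup A] (Q : Type) [Group Q]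
    (𝒞 : Q →* MulAut A) (hC : Function.Injective 𝒞) :
    ∃ f : ↥(autOfExt (SemidirectProduct.inl : A →* A ⋊[𝒞] Q)) →* MulAut A,
      Set.range f = (Subgroup.normalizer (𝒞.range : Set (MulAut A)) : Set (MulAut A)) ∧
      Nonempty (f.ker ≃* ↥(oneCocyclesGrp 𝒞)) :=
  ⟨restrictAutOfExt inl_injective, by rw [← MonoidHom.coe_range, range_restrictAutOfExt hC],
    ⟨(cocyclesEquivKerRestrictAutOfExt hC).symm⟩⟩

/-- Let `A` be a finite abelian group, `Q` a finite group,
`𝒞 : Q → Aut(A)` an injective homomorphism and `G = A ⋊ Q` the corresponding semidirect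
product.  Let `Aut_A(G)` be the subgroup of automorphisms of `G` leaving `A` invariant.
Then there is a short exact sequence `0 → Z¹(Q,A) → Aut_A(G) → N_{Aut(A)}(𝒞(Q)) → 1`:
expressed here by a homomorphism `f : Aut_A(G) → Aut(A)` whose image is exactly the
normalizer `N_{Aut(A)}(𝒞(Q))` and whose kernel is isomorphic to `Z¹(Q,A)`. -/
theorem stmt8 (A : Type) [CommGroup A] [Finite A] (Q : Type) [Group Q] [Finite Q]
    (𝒞 : Q →* MulAut A) (hC : Function.Injective 𝒞) :
    ∃ f : ↥(autOfExt (SemidirectProduct.inl : A →* A ⋊[𝒞] Q)) →* MulAut A,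
      Set.range f = (Subgroup.normalizer (𝒞.range : Set (MulAut A)) : Set (MulAut A)) ∧
      Nonempty (f.ker ≃* ↥(oneCocyclesGrp 𝒞)) :=
  stmt8_general A Q 𝒞 hC
end
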